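/- arXiv:1703.08907 — 6 statements merged into one kernel-verified Lean document; each statement's English description precedes it below -/
import Mathlib

section
/- Let (G,P) and (K,Q) be quasi-lattice ordered groups and let μ : G → K be a controlled map. Then (μ⁻¹(e), μ⁻¹(e) ∩ P) is a quasi-lattice ordered group: μ⁻¹(e) is a subgroup of G, μ⁻¹(e) ∩ P is a submonoid with trivial intersection with its set of inverses, and any two elements of μ⁻¹(e) with a common upper bound in μ⁻¹(e) ∩ P have a least common upper bound lying in μ⁻¹(e) ∩ P. -/
/-- The left-invariant relation `x ≤ y ↔ x⁻¹ * y ∈ P` associated to a submonoid `P`. -/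
def QLO.le {G : Type*} [Group G] (P : Submonoid G) (x y : G) : Prop := x⁻¹ * y ∈ P

/-- `w` is the least common upper bound of `x` and `y` lying in `P`. -/
def QLO.IsLub {G : Type*} [Group G] (P : Submonoid G) (x y w : G) : Prop :=
  w ∈ P ∧ QLO.le P x w ∧ QLO.le P y w ∧
    ∀ z ∈ P, QLO.le P x z → QLO.le P y z → QLO.le P w z

/-- `(G, P)` is a quasi-lattice ordered group. -/
def QLO.IsQLO {G : Type*} [Group G] (P : Submonoid G) : Prop :=
  (∀ x : G, x ∈ P → x⁻¹ ∈ P → x = 1) ∧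
    ∀ x y : G, (∃ z ∈ P, QLO.le P x z ∧ QLO.le P y z) → ∃ w : G, QLO.IsLub P x y w

/-- `σ` is a minimal element of `μ⁻¹(k) ∩ P`. -/
def QLO.Minimal {G K : Type*} [Group G] [Group K] (P : Submonoid G) (μ : G →* K)
    (k : K) (σ : G) : Prop :=
  μ σ = k ∧ σ ∈ P ∧ ∀ x : G, μ x = k → x ∈ P → QLO.le P x σ → x = σ

/-!
The kernel inherits the submonoid and antisymmetry properties directly from `P`. For the
least upper bound, take `w = x ∨ y` in `(G, P)`: since `μ` preserves joins,
`μ w = μ x ∨ μ y = e ∨ e = e`, so `w` lies in the kernel, and it is least there because it is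
least among all upper bounds in `P`.
-/

namespace QLO

variable {G : Type*} [Group G] {P : Submonoid G}

theorem le_refl (a : G) : le P a a := by
  simp [le]

theorem le_antisymm (hanti : ∀ x : G, x ∈ P → x⁻¹ ∈ P → x = 1) {a b : G}
    (hab : le P a b) (hba : le P b a) : a = b :=
  inv_mul_eq_one.mp (hanti _ hab (by simpa [le] using hba))

theorem IsLub.eq_self (hanti : ∀ x : G, x ∈ P → x⁻¹ ∈ P → x = 1) {a w : G}
    (ha : a ∈ P) (h : IsLub P a a w) : w = a :=
  le_antisymm hanti (h.2.2.2 a ha (le_refl a) (le_refl a)) h.2.1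

end QLO

theorem stmt1_general {G K : Type*} [Group G] [Group K] (P : Submonoid G) (Q : Submonoid K)
    (hP : QLO.IsQLO P) (hQ : QLO.IsQLO Q) (μ : G →* K)
    -- (1) μ preserves least common upper bounds
    (h1 : ∀ x y w : G, QLO.IsLub P x y w → QLO.IsLub Q (μ x) (μ y) (μ w)) :
    -- μ⁻¹(e) ∩ P is a submonoid:
    ((μ 1 = 1 ∧ (1 : G) ∈ P) ∧
      (∀ x y : G, (μ x = 1 ∧ x ∈ P) → (μ y = 1 ∧ y ∈ P) → (μ (x * y) = 1 ∧ x * y ∈ P))) ∧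
    -- with trivial intersection with its set of inverses:
    (∀ x : G, (μ x = 1 ∧ x ∈ P) → (μ x⁻¹ = 1 ∧ x⁻¹ ∈ P) → x = 1) ∧
    -- and (μ⁻¹(e), μ⁻¹(e) ∩ P) is quasi-lattice ordered:
    (∀ x y : G, μ x = 1 → μ y = 1 →
      (∃ z : G, (μ z = 1 ∧ z ∈ P) ∧
        (μ (x⁻¹ * z) = 1 ∧ x⁻¹ * z ∈ P) ∧ (μ (y⁻¹ * z) = 1 ∧ y⁻¹ * z ∈ P)) →
      ∃ w : G, (μ w = 1 ∧ w ∈ P) ∧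
        (μ (x⁻¹ * w) = 1 ∧ x⁻¹ * w ∈ P) ∧ (μ (y⁻¹ * w) = 1 ∧ y⁻¹ * w ∈ P) ∧
        ∀ z : G, (μ z = 1 ∧ z ∈ P) →
          (μ (x⁻¹ * z) = 1 ∧ x⁻¹ * z ∈ P) → (μ (y⁻¹ * z) = 1 ∧ y⁻¹ * z ∈ P) →
          (μ (w⁻¹ * z) = 1 ∧ w⁻¹ * z ∈ P)) := by
  have hker {a b : G} (ha : μ a = 1) (hb : μ b = 1) : μ (a⁻¹ * b) = 1 := by
    simp [ha, hb]
  refine ⟨⟨⟨map_one μ, P.one_mem⟩, ?_⟩, fun x ⟨_, hxP⟩ ⟨_, hxP'⟩ => hP.1 x hxP hxP', ?_⟩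
  · rintro x y ⟨hx, hxP⟩ ⟨hy, hyP⟩
    exact ⟨by simp [hx, hy], P.mul_mem hxP hyP⟩
  rintro x y hx hy ⟨z, ⟨-, hzP⟩, ⟨-, hxz⟩, ⟨-, hyz⟩⟩
  obtain ⟨w, hw⟩ := hP.2 x y ⟨z, hzP, hxz, hyz⟩
  have hQw : QLO.IsLub Q 1 1 (μ w) := by simpa only [hx, hy] using h1 x y w hw
  have hw1 : μ w = 1 := hQw.eq_self hQ.1 Q.one_mem
  exact ⟨w, ⟨hw1, hw.1⟩, ⟨hker hx hw1, hw.2.1⟩, ⟨hker hy hw1, hw.2.2.1⟩,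
    fun z ⟨hz, hzP⟩ ⟨_, hxz⟩ ⟨_, hyz⟩ => ⟨hker hw1 hz, hw.2.2.2 z hzP hxz hyz⟩⟩

theorem stmt1 {G K : Type*} [Group G] [Group K] (P : Submonoid G) (Q : Submonoid K)
    (hP : QLO.IsQLO P) (hQ : QLO.IsQLO Q) (μ : G →* K)
    -- μ is order-preserving
    (hmono : ∀ x y : G, QLO.le P x y → QLO.le Q (μ x) (μ y))
    -- (1) μ preserves least common upper bounds
    (h1 : ∀ x y w : G, QLO.IsLub P x y w → QLO.IsLub Q (μ x) (μ y) (μ w))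
    -- (2) for each k ∈ Q, the set of minimal elements of μ⁻¹(k) ∩ P is complete
    (h2 : ∀ k ∈ Q, ∀ x : G, μ x = k → x ∈ P →
      ∃ σ : G, QLO.Minimal P μ k σ ∧ QLO.le P σ x)
    -- (3) distinct minimal elements of μ⁻¹(k) ∩ P have no common upper bound
    (h3 : ∀ k ∈ Q, ∀ σ τ : G, QLO.Minimal P μ k σ → QLO.Minimal P μ k τ →
      (∃ z ∈ P, QLO.le P σ z ∧ QLO.le P τ z) → σ = τ) :
    -- μ⁻¹(e) ∩ P is a submonoid:
    ((μ 1 = 1 ∧ (1 : G) ∈ P) ∧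
      (∀ x y : G, (μ x = 1 ∧ x ∈ P) → (μ y = 1 ∧ y ∈ P) → (μ (x * y) = 1 ∧ x * y ∈ P))) ∧
    -- with trivial intersection with its set of inverses:
    (∀ x : G, (μ x = 1 ∧ x ∈ P) → (μ x⁻¹ = 1 ∧ x⁻¹ ∈ P) → x = 1) ∧
    -- and (μ⁻¹(e), μ⁻¹(e) ∩ P) is quasi-lattice ordered:
    (∀ x y : G, μ x = 1 → μ y = 1 →
      (∃ z : G, (μ z = 1 ∧ z ∈ P) ∧
        (μ (x⁻¹ * z) = 1 ∧ x⁻¹ * z ∈ P) ∧ (μ (y⁻¹ * z) = 1 ∧ y⁻¹ * z ∈ P)) →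
      ∃ w : G, (μ w = 1 ∧ w ∈ P) ∧
        (μ (x⁻¹ * w) = 1 ∧ x⁻¹ * w ∈ P) ∧ (μ (y⁻¹ * w) = 1 ∧ y⁻¹ * w ∈ P) ∧
        ∀ z : G, (μ z = 1 ∧ z ∈ P) →
          (μ (x⁻¹ * z) = 1 ∧ x⁻¹ * z ∈ P) → (μ (y⁻¹ * z) = 1 ∧ y⁻¹ * z ∈ P) →
          (μ (w⁻¹ * z) = 1 ∧ w⁻¹ * z ∈ P)) :=
  stmt1_general P Q hP hQ μ h1
end

section
/- Let (G,P) be a quasi-lattice ordered group and let B be a subgroup of G such that for every x, y ∈ B with x ∨ y < ∞ one has x ∨ y ∈ B. Then for every x ∈ B that can be written as x = s·t⁻¹ with s, t ∈ P, there exist μ, ν ∈ B ∩ P such that x = μ·ν⁻¹ and, for all p, q ∈ P with p·q⁻¹ = x, μ ≤ p and ν ≤ q. -/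
/-! The least common upper bound `μ = x ∨ 1` exists because `s` bounds both `x` and `1`, and
it lies in `B` by the closure hypothesis; then `ν = x⁻¹ μ`. Any other factorisation `x = p q⁻¹`
has `p` as a common upper bound of `x` and `1`, so `μ ≤ p`, and by left invariance
`ν = x⁻¹ μ ≤ x⁻¹ p = q`. -/

namespace QLO

variable {G : Type*} [Group G] {P : Submonoid G}

theorem one_le_iff {p : G} : le P 1 p ↔ p ∈ P := by
  simp [le]

theorem mul_inv_le_self (p : G) {q : G} (hq : q ∈ P) : le P (p * q⁻¹) p := by
  simpa [le] using hq

theorem mul_le_mul_left_iff (g : G) {x y : G} : le P (g * x) (g * y) ↔ le P x y := by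
  simp [le, mul_assoc]

theorem exists_isLub_mul_inv_one (hP : IsQLO P) {s t : G} (hs : s ∈ P) (ht : t ∈ P) :
    ∃ w, IsLub P (s * t⁻¹) 1 w :=
  hP.2 _ _ ⟨s, hs, mul_inv_le_self s ht, one_le_iff.2 hs⟩

theorem IsLub.le_of_mul_inv {p q w : G} (hw : IsLub P (p * q⁻¹) 1 w) (hp : p ∈ P)
    (hq : q ∈ P) : le P w p :=
  hw.2.2.2 p hp (mul_inv_le_self p hq) (one_le_iff.2 hp)

end QLO

theorem stmt3 {G : Type*} [Group G] (P : Submonoid G) (hP : QLO.IsQLO P)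
    (B : Subgroup G)
    -- B is closed under taking least common upper bounds
    (H3 : ∀ x y w : G, x ∈ B → y ∈ B → QLO.IsLub P x y w → w ∈ B) :
    ∀ x ∈ B, ∀ s t : G, s ∈ P → t ∈ P → x = s * t⁻¹ →
      ∃ μ ν : G, μ ∈ B ∧ μ ∈ P ∧ ν ∈ B ∧ ν ∈ P ∧ x = μ * ν⁻¹ ∧
        ∀ p q : G, p ∈ P → q ∈ P → p * q⁻¹ = x → QLO.le P μ p ∧ QLO.le P ν q := by
  intro x hxB s t hs ht hx
  obtain ⟨μ, hμ⟩ : ∃ μ, QLO.IsLub P x 1 μ := hx ▸ QLO.exists_isLub_mul_inv_one hP hs ht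
  have hμB : μ ∈ B := H3 x 1 μ hxB B.one_mem hμ
  refine ⟨μ, x⁻¹ * μ, hμB, hμ.1, B.mul_mem (B.inv_mem hxB) hμB, hμ.2.1, by group, ?_⟩
  intro p q hp hq hpq
  have hμp : QLO.le P μ p := (hpq ▸ hμ).le_of_mul_inv hp hq
  have hq_eq : x⁻¹ * p = q := by rw [← hpq]; group
  exact ⟨hμp, hq_eq ▸ (QLO.mul_le_mul_left_iff x⁻¹).2 hμp⟩
end

section
/- Fix integers c, d ≥ 1. Consider the quasi-lattice ordered group (ℤ, ℕ) with subgroups A = dℤ and B = cℤ and the group isomorphism φ : A → B given by φ(dm) = cm. Let ℤ* be the HNN extension of ℤ with respect to A, B, φ (so ℤ* has presentation ⟨x, t ∣ t⁻¹x^d t = x^c⟩, i.e. the Baumslag–Solitar group BS(c,d)), and let ℕ* be the submonoid of ℤ* generated by of(ℕ) and t. Then (ℤ*, ℕ*) is quasi-lattice ordered: ℕ* ∩ (ℕ*)⁻¹ = {e}, and every pair of elements of ℤ* with a common upper bound in ℕ* (for the order u ≤ v iff u⁻¹v ∈ ℕ*) has a least common upper bound in ℕ*. -/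
/-!
Write `a` for the generator of `ℤ`. Every element of the HNN extension has a unique normal form
`a^h t^{ε₁} a^{r₁} ⋯ t^{εₙ} a^{rₙ}` with `0 ≤ rᵢ < d` when `εᵢ = 1` and `0 ≤ rᵢ < c` when
`εᵢ = -1`, and `ℕ*` consists exactly of the normal forms with `h ≥ 0` and all `εᵢ = 1`.

The key fact is that the set `U(g)` of upper bounds of `g` in `ℕ*` is, when nonempty, a principal
right ideal `s ℕ*`; then `U(x) ∩ U(y) = sₓ U(sₓ⁻¹ s_y)` is principal too, and its generator is
`x ∨ y`. Principality is proved by induction on the length of the normal form of `g`. Comparing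
the reduced word of `g⁻¹ z` built from the normal forms of `g` and `z` with the normal form of
`g⁻¹ z` (Britton's lemma) shows:
* if the normal form of `g` starts with `t⁻¹` and `U(g)` is nonempty, it contains no `t` at all.
  Then `g⁻¹` is a product of powers of `a` and of `t`, and such products act on normal forms
  without `t⁻¹` through the head alone, so whether `z ∈ ℕ*` lies in `U(g)` depends only on the
  head of `z`; the least admissible head `k` gives `U(g) = a^k ℕ*`.
* if `g = a^h t g'`, every `z ∈ U(g)` is `a^(h + cm) t p` with `p ∈ U(a^(-dm) g')`, because
  `t a^(dm) = a^(cm) t`. Minimising over `m` and applying induction to `a^(-dm) g'` gives `s`.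
-/

open HNNExtension HNNExtension.NormalWord Multiplicative Subgroup Pointwise

namespace QLO

variable {G : Type*} [Group G] (P : Submonoid G)

def upperBoundsIn (g : G) : Set G := (P : Set G) ∩ g • (P : Set G)

variable {P}

theorem le_iff_mem_smul {x z : G} : QLO.le P x z ↔ z ∈ x • (P : Set G) := by
  rw [Set.mem_smul_set_iff_inv_smul_mem]; rfl

theorem mem_upperBoundsIn {g z : G} :
    z ∈ upperBoundsIn P g ↔ z ∈ P ∧ g⁻¹ * z ∈ P := by
  rw [upperBoundsIn, Set.mem_inter_iff, Set.mem_smul_set_iff_inv_smul_mem]; rfl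

theorem self_mem_smul (s : G) : s ∈ s • (P : Set G) :=
  ⟨1, P.one_mem, mul_one s⟩

theorem smul_subset_upperBoundsIn {g s : G} (hs : s ∈ upperBoundsIn P g) :
    s • (P : Set G) ⊆ upperBoundsIn P g := by
  rintro _ ⟨p, hp, rfl⟩
  rw [mem_upperBoundsIn] at hs ⊢
  refine ⟨P.mul_mem hs.1 hp, ?_⟩
  simpa only [smul_eq_mul, ← mul_assoc] using P.mul_mem hs.2 hp

theorem upperBoundsIn_eq_smul {g s : G} (hs : s ∈ upperBoundsIn P g)
    (h : ∀ z ∈ upperBoundsIn P g, s⁻¹ * z ∈ P) : upperBoundsIn P g = s • (P : Set G) :=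
  (Set.Subset.antisymm fun z hz => Set.mem_smul_set_iff_inv_smul_mem.2 (h z hz))
    (smul_subset_upperBoundsIn hs)

theorem isLub_of_inter_eq_smul {x y w : G}
    (h : upperBoundsIn P x ∩ upperBoundsIn P y = w • (P : Set G)) : IsLub P x y w := by
  have hw := h ▸ self_mem_smul w
  simp only [Set.mem_inter_iff, mem_upperBoundsIn] at hw
  refine ⟨hw.1.1, hw.1.2, hw.2.2, fun z hz hxz hyz => ?_⟩
  have hz : z ∈ upperBoundsIn P x ∩ upperBoundsIn P y :=
    ⟨mem_upperBoundsIn.2 ⟨hz, hxz⟩, mem_upperBoundsIn.2 ⟨hz, hyz⟩⟩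
  exact le_iff_mem_smul.2 (h ▸ hz)

theorem isQLO_of_upperBoundsIn_eq_smul (hP : ∀ x ∈ P, x⁻¹ ∈ P → x = 1)
    (h : ∀ g, (upperBoundsIn P g).Nonempty → ∃ s : G, upperBoundsIn P g = s • (P : Set G)) :
    IsQLO P := by
  refine ⟨hP, fun x y ⟨z, hz, hxz, hyz⟩ => ?_⟩
  obtain ⟨sx, hsx⟩ := h x ⟨z, mem_upperBoundsIn.2 ⟨hz, hxz⟩⟩
  obtain ⟨sy, hsy⟩ := h y ⟨z, mem_upperBoundsIn.2 ⟨hz, hyz⟩⟩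
  have key : upperBoundsIn P x ∩ upperBoundsIn P y = sx • upperBoundsIn P (sx⁻¹ * sy) := by
    rw [hsx, hsy, upperBoundsIn, Set.smul_set_inter, smul_smul, mul_inv_cancel_left]
  obtain ⟨s, hs⟩ := h (sx⁻¹ * sy) <| by
    rw [← Set.smul_set_nonempty (a := sx), ← key]
    exact ⟨z, mem_upperBoundsIn.2 ⟨hz, hxz⟩, mem_upperBoundsIn.2 ⟨hz, hyz⟩⟩
  exact ⟨sx * s, isLub_of_inter_eq_smul (by rw [key, hs, smul_smul])⟩

end QLO

namespace HNNExtension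

variable {G : Type*} [Group G] {A B : Subgroup G} (φ : A ≃* B)

def wordProd (h : G) (L : List (ℤˣ × G)) : HNNExtension G A B φ :=
  of h * (L.map fun x => t ^ (x.1 : ℤ) * of x.2).prod

/-- `invMulAux h L k T` is the word `(h L)⁻¹ (k T)`, obtained by moving the letters of `L`,
inverted, one at a time onto the front of `T`. -/
def invMulAux : G → List (ℤˣ × G) → G → List (ℤˣ × G) → G × List (ℤˣ × G)
  | h, [], k, T => (h⁻¹ * k, T)
  | h, (u, g) :: L, k, T => invMulAux g L 1 ((-u, h⁻¹ * k) :: T)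

theorem wordProd_invMulAux (L : List (ℤˣ × G)) (h k : G) (T : List (ℤˣ × G)) :
    wordProd φ (invMulAux h L k T).1 (invMulAux h L k T).2 =
      (wordProd φ h L)⁻¹ * wordProd φ k T := by
  induction L generalizing h k T with
  | nil => simp [invMulAux, wordProd, mul_assoc]
  | cons a L ih =>
    obtain ⟨u, g⟩ := a
    rw [invMulAux, ih]
    simp only [wordProd, List.map_cons, List.prod_cons, Units.val_neg, zpow_neg, map_one, one_mul,
      map_mul, map_inv]
    group

theorem map_fst_invMulAux (L : List (ℤˣ × G)) (h k : G) (T : List (ℤˣ × G)) :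
    (invMulAux h L k T).2.map Prod.fst = (L.map fun p => -p.1).reverse ++ T.map Prod.fst := by
  induction L generalizing h k T with
  | nil => rfl
  | cons a L ih => simp [invMulAux, ih]

theorem isChain_invMulAux (L : List (ℤˣ × G)) (h k : G) (T : List (ℤˣ × G))
    (hL : L.IsChain fun a b => a.2 ∈ toSubgroup A B a.1 → a.1 = b.1)
    (hT : T.IsChain fun a b => a.2 ∈ toSubgroup A B a.1 → a.1 = b.1)
    (hjunc : ∀ a ∈ L.head?, ∀ b ∈ T.head?,
      h⁻¹ * k ∈ toSubgroup A B (-a.1) → -a.1 = b.1) :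
    (invMulAux h L k T).2.IsChain fun a b => a.2 ∈ toSubgroup A B a.1 → a.1 = b.1 := by
  induction L generalizing h k T with
  | nil => exact hT
  | cons a L ih =>
    obtain ⟨u, g⟩ := a
    refine ih g 1 _ (List.isChain_cons.1 hL).2
      (List.isChain_cons.2 ⟨hjunc (u, g) rfl, hT⟩) ?_
    rintro ⟨u', g'⟩ ha' b hb hmem
    obtain rfl : (-u, h⁻¹ * k) = b := Option.some_injective _ hb
    rw [mul_one, inv_mem_iff] at hmem
    by_contra hne
    obtain rfl : u' = -u := Int.units_ne_iff_eq_neg.1 fun h => hne (by rw [h])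
    rw [neg_neg] at hmem
    exact units_ne_neg_self u ((List.isChain_cons.1 hL).1 _ ha' hmem)

/-- `hjunc` says that no pinch `t^(-ε) g t^ε` forms where the words `w₁⁻¹` and `w₂` meet. -/
theorem NormalWord.ReducedWord.map_fst_eq_of_prod_eq_inv_mul {w₁ w₂ w : ReducedWord G A B}
    (hjunc : ∀ a ∈ w₁.toList.head?, ∀ b ∈ w₂.toList.head?,
      w₁.head⁻¹ * w₂.head ∈ toSubgroup A B (-a.1) → -a.1 = b.1)
    (hw : w.prod φ = (w₁.prod φ)⁻¹ * w₂.prod φ) :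
    w.toList.map Prod.fst =
      (w₁.toList.map fun p => -p.1).reverse ++ w₂.toList.map Prod.fst := by
  let J : ReducedWord G A B :=
    ⟨(invMulAux w₁.head w₁.toList w₂.head w₂.toList).1, _,
      isChain_invMulAux _ _ _ _ w₁.chain w₂.chain hjunc⟩
  have hJ : J.prod φ = w.prod φ := (wordProd_invMulAux φ _ _ _ _).trans hw.symm
  rw [← (ReducedWord.map_fst_eq_and_of_prod_eq φ hJ).1, map_fst_invMulAux]

theorem NormalWord.exists_tail {d : NormalWord.TransversalPair G A B} (w : NormalWord d)
    {u : ℤˣ} {x : G} {L : List (ℤˣ × G)} (hw : w.toList = (u, x) :: L) :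
    ∃ w' : NormalWord d, w'.head = x ∧ w'.toList = L ∧
      w.prod φ = of w.head * (t ^ (u : ℤ) * w'.prod φ) := by
  have hchain := w.chain
  rw [hw] at hchain
  refine ⟨⟨⟨x, L, (List.isChain_cons.1 hchain).2⟩, fun v y hy => w.mem_set v y ?_⟩,
    rfl, rfl, ?_⟩
  · rw [hw]; exact List.mem_cons_of_mem _ hy
  · simp [ReducedWord.prod, hw, mul_assoc]

end HNNExtension

theorem toAdd_emod_eq_of_mul_eq {e : ℤ} {s r x : Multiplicative ℤ} (hs : e ∣ toAdd s)
    (hr : toAdd r ∈ Set.Ico 0 e) (h : s * r = x) : toAdd x % e = toAdd r := by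
  obtain ⟨m, hm⟩ := hs
  rw [← h, toAdd_mul, hm, add_comm, Int.add_mul_emod_self_left, Int.emod_eq_of_lt hr.1 hr.2]

theorem isComplement_preimage_Ico {S : Subgroup (Multiplicative ℤ)} {e : ℤ} (he : 0 < e)
    (hS : ∀ x, x ∈ S ↔ e ∣ toAdd x) :
    IsComplement (S : Set (Multiplicative ℤ)) (toAdd ⁻¹' Set.Ico 0 e) := by
  refine isComplement_iff_existsUnique.2 fun g =>
    ⟨(⟨ofAdd (toAdd g - toAdd g % e), ?_⟩, ⟨ofAdd (toAdd g % e), ?_⟩), ?_, ?_⟩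
  · exact (hS _).2 (by simpa using Int.dvd_self_sub_emod)
  · exact ⟨Int.emod_nonneg _ he.ne', Int.emod_lt_of_pos _ he⟩
  · simp
  · rintro ⟨⟨s, hs⟩, ⟨r, hr⟩⟩ h
    have hr' := toAdd_emod_eq_of_mul_eq ((hS s).1 hs) hr h
    have hs' : s = g * r⁻¹ := eq_mul_inv_of_mul_eq h
    ext <;> simp [hs', hr', sub_eq_add_neg]

theorem toAdd_isComplement_equiv_fst {S : Subgroup (Multiplicative ℤ)} {e : ℤ} (he : 0 < e)
    (hS : ∀ x, x ∈ S ↔ e ∣ toAdd x) (g : Multiplicative ℤ) :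
    toAdd (((isComplement_preimage_Ico he hS).equiv g).1 : Multiplicative ℤ) =
      e * (toAdd g / e) := by
  set hST := isComplement_preimage_Ico he hS
  have hr := toAdd_emod_eq_of_mul_eq ((hS _).1 (hST.equiv g).1.2) (hST.equiv g).2.2
    (hST.equiv_fst_mul_equiv_snd g)
  rw [IsComplement.equiv_fst_eq_mul_inv, toAdd_mul, toAdd_inv, ← hr]
  have := Int.mul_ediv_add_emod (toAdd g) e
  omega

structure BaumslagSolitarData where
  c : ℤ
  d : ℤ
  one_le_c : 1 ≤ c
  one_le_d : 1 ≤ d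
  A : Subgroup (Multiplicative ℤ)
  B : Subgroup (Multiplicative ℤ)
  mem_A : ∀ x : Multiplicative ℤ, x ∈ A ↔ ∃ m : ℤ, toAdd x = d * m
  mem_B : ∀ x : Multiplicative ℤ, x ∈ B ↔ ∃ m : ℤ, toAdd x = c * m
  φ : A ≃* B
  toAdd_φ : ∀ (x : A) (m : ℤ), toAdd (x : Multiplicative ℤ) = d * m →
    toAdd ((φ x : B) : Multiplicative ℤ) = c * m

namespace BaumslagSolitarData

open QLO

variable (X : BaumslagSolitarData)

abbrev BSGroup : Type := HNNExtension (Multiplicative ℤ) X.A X.B X.φ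

def modulus (u : ℤˣ) : ℤ := if u = 1 then X.d else X.c

theorem modulus_pos (u : ℤˣ) : 0 < X.modulus u := by
  unfold modulus
  split_ifs <;> linarith [X.one_le_c, X.one_le_d]

theorem mem_toSubgroup_iff (u : ℤˣ) (x : Multiplicative ℤ) :
    x ∈ toSubgroup X.A X.B u ↔ X.modulus u ∣ toAdd x := by
  rcases Int.units_eq_one_or u with rfl | rfl
  · exact X.mem_A x
  · exact X.mem_B x

def transversal : TransversalPair (Multiplicative ℤ) X.A X.B where
  set u := toAdd ⁻¹' Set.Ico 0 (X.modulus u)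
  compl u := isComplement_preimage_Ico (X.modulus_pos u) (X.mem_toSubgroup_iff u)

theorem of_mul_t (m : ℤ) :
    (of (ofAdd (X.c * m)) * t : X.BSGroup) = t * of (ofAdd (X.d * m)) := by
  have ha : ofAdd (X.d * m) ∈ X.A := (X.mem_A _).2 ⟨m, rfl⟩
  have hφ : ((X.φ ⟨_, ha⟩ : X.B) : Multiplicative ℤ) = ofAdd (X.c * m) :=
    X.toAdd_φ ⟨_, ha⟩ m rfl
  rw [← hφ]
  exact (t_mul_of _).symm

noncomputable abbrev normalForm (g : X.BSGroup) : NormalWord X.transversal := g • NormalWord.empty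

theorem prod_normalForm (g : X.BSGroup) : (X.normalForm g).prod X.φ = g := by
  simp [normalForm]

theorem normalForm_mul (a b : X.BSGroup) : X.normalForm (a * b) = a • X.normalForm b :=
  mul_smul a b _

theorem normalForm_prod (w : NormalWord X.transversal) : X.normalForm (w.prod X.φ) = w :=
  prod_smul_empty _ _

theorem normalForm_of (y : Multiplicative ℤ) :
    X.normalForm (of y) = ofGroup y := by
  ext <;> simp [normalForm, of_smul_eq_smul]

def cone : Submonoid X.BSGroup := Submonoid.closure (of '' {x | 0 ≤ toAdd x} ∪ {t})

def ofTMonoid : Submonoid X.BSGroup := Submonoid.closure (Set.range of ∪ {t})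

variable {X}

def PositiveLetters (w : NormalWord X.transversal) : Prop := ∀ p ∈ w.toList, p.1 = 1

def IsPositive (w : NormalWord X.transversal) : Prop := 0 ≤ toAdd w.head ∧ PositiveLetters w

theorem t_smul_of_positiveLetters {w : NormalWord X.transversal} (hw : PositiveLetters w) :
    toAdd ((t : X.BSGroup) • w).head = X.c * (toAdd w.head / X.d) ∧
      ∃ r, ((t : X.BSGroup) • w).toList = (1, r) :: w.toList := by
  have hnc : ¬ Cancels 1 w := by
    rintro ⟨-, h⟩
    obtain ⟨p, hp, hp1⟩ := Option.map_eq_some_iff.1 h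
    rw [hw p (List.mem_of_mem_head? hp)] at hp1
    exact absurd hp1 (by decide)
  rw [t_smul_eq_unitsSMul, unitsSMul, dif_neg hnc]
  exact ⟨X.toAdd_φ _ _
    (toAdd_isComplement_equiv_fst (X.modulus_pos 1) (X.mem_toSubgroup_iff 1) _), _, rfl⟩

theorem PositiveLetters.t_smul {w : NormalWord X.transversal} (hw : PositiveLetters w) :
    PositiveLetters ((t : X.BSGroup) • w) := by
  obtain ⟨r, hr⟩ := (t_smul_of_positiveLetters hw).2
  intro p hp
  rw [hr, List.mem_cons] at hp
  rcases hp with rfl | hp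
  exacts [rfl, hw p hp]

theorem PositiveLetters.smul_of_mem_ofTMonoid {q : X.BSGroup} (hq : q ∈ X.ofTMonoid)
    {w : NormalWord X.transversal} (hw : PositiveLetters w) : PositiveLetters (q • w) := by
  induction hq using Submonoid.closure_induction generalizing w with
  | mem q hq =>
    rcases hq with ⟨y, rfl⟩ | rfl
    · rwa [of_smul_eq_smul]
    · exact hw.t_smul
  | one => rwa [one_smul]
  | mul a b _ _ ha hb => rw [mul_smul]; exact ha (hb hw)

theorem head_smul_eq_of_mem_ofTMonoid {q : X.BSGroup} (hq : q ∈ X.ofTMonoid)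
    {w w' : NormalWord X.transversal} (hw : PositiveLetters w) (hw' : PositiveLetters w')
    (h : w.head = w'.head) : (q • w).head = (q • w').head := by
  induction hq using Submonoid.closure_induction generalizing w w' with
  | mem q hq =>
    rcases hq with ⟨y, rfl⟩ | rfl
    · simp only [of_smul_eq_smul, group_smul_head, h]
    · apply toAdd.injective
      rw [(t_smul_of_positiveLetters hw).1, (t_smul_of_positiveLetters hw').1, h]
  | one => rwa [one_smul, one_smul]
  | mul a b hamem hbmem ha hb =>
    rw [mul_smul, mul_smul]
    exact ha (hw.smul_of_mem_ofTMonoid hbmem) (hw'.smul_of_mem_ofTMonoid hbmem) (hb hw hw' h)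

theorem IsPositive.smul_of_mem_cone {p : X.BSGroup} (hp : p ∈ X.cone)
    {w : NormalWord X.transversal} (hw : IsPositive w) : IsPositive (p • w) := by
  induction hp using Submonoid.closure_induction generalizing w with
  | mem p hp =>
    rcases hp with ⟨y, hy, rfl⟩ | rfl
    · rw [of_smul_eq_smul]
      exact ⟨add_nonneg hy hw.1, hw.2⟩
    · refine ⟨?_, hw.2.t_smul⟩
      rw [(t_smul_of_positiveLetters hw.2).1]
      exact mul_nonneg (by linarith [X.one_le_c]) (Int.ediv_nonneg hw.1 (by linarith [X.one_le_d]))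
  | one => rwa [one_smul]
  | mul a b _ _ ha hb => rw [mul_smul]; exact ha (hb hw)

theorem IsPositive.prod_mem_cone {w : NormalWord X.transversal} (hw : IsPositive w) :
    w.prod X.φ ∈ X.cone := by
  refine X.cone.mul_mem (Submonoid.subset_closure (Or.inl ⟨_, hw.1, rfl⟩))
    (Submonoid.list_prod_mem _ fun x hx => ?_)
  obtain ⟨⟨u, y⟩, hp, rfl⟩ := List.mem_map.1 hx
  obtain rfl : u = 1 := hw.2 _ hp
  refine X.cone.mul_mem ?_ (Submonoid.subset_closure (Or.inl ⟨y, (w.mem_set 1 y hp).1, rfl⟩))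
  rw [Units.val_one, zpow_one]
  exact Submonoid.subset_closure (Or.inr rfl)

theorem mem_cone_iff {g : X.BSGroup} : g ∈ X.cone ↔ IsPositive (X.normalForm g) :=
  ⟨fun hg => IsPositive.smul_of_mem_cone hg ⟨le_rfl, fun _ h => absurd h List.not_mem_nil⟩,
    fun hg => X.prod_normalForm g ▸ hg.prod_mem_cone⟩

theorem of_mem_cone_iff {y : Multiplicative ℤ} :
    (of y : X.BSGroup) ∈ X.cone ↔ 0 ≤ toAdd y := by
  simp [mem_cone_iff, normalForm_of, IsPositive, PositiveLetters]

theorem inv_prod_mem_ofTMonoid {w : NormalWord X.transversal} (hw : ∀ p ∈ w.toList, p.1 = -1) :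
    (w.prod X.φ)⁻¹ ∈ X.ofTMonoid := by
  rw [ReducedWord.prod, mul_inv_rev, List.prod_inv_reverse]
  refine X.ofTMonoid.mul_mem (Submonoid.list_prod_mem _ fun x hx => ?_)
    (Submonoid.subset_closure (Or.inl ⟨_, map_inv of w.head⟩))
  simp only [List.mem_reverse, List.map_map, List.mem_map] at hx
  obtain ⟨⟨u, y⟩, hp, rfl⟩ := hx
  obtain rfl : u = -1 := hw _ hp
  simp only [Function.comp_apply, Units.val_neg, Units.val_one, zpow_neg, zpow_one, inv_inv,
    mul_inv_rev, ← map_inv]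
  exact X.ofTMonoid.mul_mem (Submonoid.subset_closure (Or.inl ⟨_, rfl⟩))
    (Submonoid.subset_closure (Or.inr rfl))

theorem eq_of_head_of_toList_eq_nil {g : X.BSGroup} (hg : (X.normalForm g).toList = []) :
    g = of (X.normalForm g).head := by
  conv_lhs => rw [← X.prod_normalForm g]
  simp [ReducedWord.prod, hg]

theorem inv_mem_ofTMonoid {g : X.BSGroup} (hg : ∀ p ∈ (X.normalForm g).toList, p.1 = -1) :
    g⁻¹ ∈ X.ofTMonoid :=
  X.prod_normalForm g ▸ inv_prod_mem_ofTMonoid hg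

theorem letters_eq_neg_one_of_mem_upperBoundsIn {g z : X.BSGroup}
    (hz : z ∈ upperBoundsIn X.cone g)
    (hjunc : ∀ a ∈ (X.normalForm g).toList.head?, ∀ b ∈ (X.normalForm z).toList.head?,
      (X.normalForm g).head⁻¹ * (X.normalForm z).head ∈ toSubgroup X.A X.B (-a.1) →
        -a.1 = b.1) :
    ∀ p ∈ (X.normalForm g).toList, p.1 = -1 := by
  rw [mem_upperBoundsIn, mem_cone_iff] at hz
  have hfst := ReducedWord.map_fst_eq_of_prod_eq_inv_mul X.φ
    (w := (X.normalForm (g⁻¹ * z)).toReducedWord) hjunc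
    (by simp only [prod_normalForm])
  intro p hp
  have hmem : -p.1 ∈ (X.normalForm (g⁻¹ * z)).toList.map Prod.fst := by
    rw [hfst]
    exact List.mem_append_left _ (List.mem_reverse.2 (List.mem_map_of_mem hp))
  obtain ⟨q, hq, hqp⟩ := List.mem_map.1 hmem
  rw [← neg_eq_iff_eq_neg, ← hqp, (mem_cone_iff.1 hz.2).2 q hq]

theorem letters_eq_neg_one_of_head_eq_neg_one {g z : X.BSGroup}
    (hz : z ∈ upperBoundsIn X.cone g)
    (hg : ∀ a ∈ (X.normalForm g).toList.head?, a.1 = -1) :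
    ∀ p ∈ (X.normalForm g).toList, p.1 = -1 := by
  refine letters_eq_neg_one_of_mem_upperBoundsIn hz fun a ha b hb _ => ?_
  rw [hg a ha, neg_neg, (mem_cone_iff.1 hz.1).2 b (List.mem_of_mem_head? hb)]

theorem toList_ne_nil_and_dvd_of_mem_upperBoundsIn {g z : X.BSGroup} {x : Multiplicative ℤ}
    {L : List (ℤˣ × Multiplicative ℤ)} (hz : z ∈ upperBoundsIn X.cone g)
    (hg : (X.normalForm g).toList = (1, x) :: L) :
    (X.normalForm z).toList ≠ [] ∧
      X.c ∣ toAdd (X.normalForm z).head - toAdd (X.normalForm g).head := by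
  by_contra hcon
  have := letters_eq_neg_one_of_mem_upperBoundsIn hz fun a ha b hb hmem => by
    rw [hg, List.head?_cons, Option.mem_some_iff] at ha
    subst ha
    rw [X.mem_toSubgroup_iff, toAdd_mul, toAdd_inv, neg_add_eq_sub] at hmem
    exact absurd ⟨List.ne_nil_of_mem (List.mem_of_mem_head? hb), hmem⟩ hcon
  exact absurd (this (1, x) (by simp [hg])) (units_ne_neg_self 1)

theorem of_inv_mul_mem_cone {y : Multiplicative ℤ} {z : X.BSGroup} (hz : z ∈ X.cone)
    (hy : toAdd y ≤ toAdd (X.normalForm z).head) : (of y)⁻¹ * z ∈ X.cone := by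
  rw [mem_cone_iff] at hz ⊢
  rw [normalForm_mul, ← map_inv, of_smul_eq_smul]
  exact ⟨by simpa using hy, hz.2⟩

theorem inv_mul_mem_cone_iff {g z : X.BSGroup} (hg : g⁻¹ ∈ X.ofTMonoid) (hz : z ∈ X.cone) :
    g⁻¹ * z ∈ X.cone ↔ g⁻¹ * of (X.normalForm z).head ∈ X.cone := by
  have hz' := mem_cone_iff.1 hz
  have hof : PositiveLetters (X.normalForm (of (X.normalForm z).head)) := by
    simp [normalForm_of, PositiveLetters]
  simp only [mem_cone_iff, normalForm_mul, IsPositive, hz'.2.smul_of_mem_ofTMonoid hg,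
    hof.smul_of_mem_ofTMonoid hg, and_true]
  rw [head_smul_eq_of_mem_ofTMonoid hg hz'.2 hof (by simp [normalForm_of])]

theorem exists_upperBoundsIn_eq_smul_of_inv_mem {g : X.BSGroup} (hg : g⁻¹ ∈ X.ofTMonoid)
    (hne : (upperBoundsIn X.cone g).Nonempty) :
    ∃ s : X.BSGroup, upperBoundsIn X.cone g = s • (X.cone : Set X.BSGroup) := by
  have hmem : ∀ z ∈ X.cone, z ∈ upperBoundsIn X.cone g ↔
      of (X.normalForm z).head ∈ upperBoundsIn X.cone g := fun z hz => by
    simp [mem_upperBoundsIn, hz, inv_mul_mem_cone_iff hg hz, of_mem_cone_iff,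
      (mem_cone_iff.1 hz).1]
  obtain ⟨z₀, hz₀⟩ := hne
  obtain ⟨k₀, hk₀, hmin⟩ := Int.exists_least_of_bdd
    (P := fun k => (of (ofAdd k) : X.BSGroup) ∈ upperBoundsIn X.cone g)
    ⟨0, fun k hk => of_mem_cone_iff.1 hk.1⟩ ⟨_, (hmem z₀ hz₀.1).1 hz₀⟩
  exact ⟨of (ofAdd k₀), upperBoundsIn_eq_smul hk₀ fun z hz =>
    of_inv_mul_mem_cone hz.1 (hmin _ ((hmem z hz.1).1 hz))⟩

theorem inv_mul_of_t_mul (a b : X.BSGroup) {h k : ℤ} (m : ℤ) (hk : k = h + X.c * m) :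
    (of (ofAdd h) * (t * a))⁻¹ * (of (ofAdd k) * (t * b)) =
      a⁻¹ * (of (ofAdd (X.d * m)) * b) := by
  have hof : (of (ofAdd h))⁻¹ * of (ofAdd k) = (of (ofAdd (X.c * m)) : X.BSGroup) := by
    rw [← map_inv, ← map_mul, hk, ← ofAdd_neg, ← ofAdd_add, neg_add_cancel_left]
  calc (of (ofAdd h) * (t * a))⁻¹ * (of (ofAdd k) * (t * b))
      = a⁻¹ * (t⁻¹ * ((of (ofAdd h))⁻¹ * of (ofAdd k) * t) * b) := by group
    _ = a⁻¹ * (of (ofAdd (X.d * m)) * b) := by rw [hof, X.of_mul_t, inv_mul_cancel_left]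

theorem t_mul_mem_upperBoundsIn {a b : X.BSGroup} {h m : ℤ} (hk₀ : 0 ≤ h + X.c * m)
    (hb : b ∈ upperBoundsIn X.cone (of (ofAdd (-(X.d * m))) * a)) :
    of (ofAdd (h + X.c * m)) * (t * b) ∈ upperBoundsIn X.cone (of (ofAdd h) * (t * a)) := by
  rw [mem_upperBoundsIn] at hb ⊢
  refine ⟨X.cone.mul_mem (of_mem_cone_iff.2 hk₀)
    (X.cone.mul_mem (Submonoid.subset_closure (Or.inr rfl)) hb.1), ?_⟩
  rw [inv_mul_of_t_mul a b m rfl]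
  simpa [mul_assoc] using hb.2

theorem exists_prod_eq_of_mul_t_mul {w : NormalWord X.transversal} {x : Multiplicative ℤ}
    {L : List (ℤˣ × Multiplicative ℤ)} (hw : w.toList = (1, x) :: L) :
    ∃ b : X.BSGroup, w.prod X.φ = of (ofAdd (toAdd w.head)) * (t * b) ∧
      (X.normalForm b).toList = L ∧ (PositiveLetters w → b ∈ X.cone) := by
  obtain ⟨w', hw'x, hw'L, hprod⟩ := w.exists_tail X.φ hw
  refine ⟨w'.prod X.φ, by simpa using hprod, by rw [normalForm_prod, hw'L], fun hpos => ?_⟩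
  refine IsPositive.prod_mem_cone ⟨?_, fun p hp => hpos p ?_⟩
  · rw [hw'x]
    exact (w.mem_set 1 x (by simp [hw])).1
  · rw [hw, ← hw'L]
    exact List.mem_cons_of_mem _ hp

theorem exists_eq_t_mul_of_mem_upperBoundsIn {g a z : X.BSGroup} {x : Multiplicative ℤ}
    {L : List (ℤˣ × Multiplicative ℤ)} (hL : (X.normalForm g).toList = (1, x) :: L)
    (hg : g = of (ofAdd (toAdd (X.normalForm g).head)) * (t * a))
    (hz : z ∈ upperBoundsIn X.cone g) :
    ∃ m b, 0 ≤ toAdd (X.normalForm g).head + X.c * m ∧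
      b ∈ upperBoundsIn X.cone (of (ofAdd (-(X.d * m))) * a) ∧
      z = of (ofAdd (toAdd (X.normalForm g).head + X.c * m)) * (t * b) := by
  obtain ⟨hne, ⟨m, hm⟩⟩ := toList_ne_nil_and_dvd_of_mem_upperBoundsIn hz hL
  obtain ⟨⟨u, y⟩, Lz, hLz⟩ := List.exists_cons_of_ne_nil hne
  have hz' := mem_cone_iff.1 hz.1
  obtain rfl : u = 1 := hz'.2 (u, y) (by simp [hLz])
  obtain ⟨b, hzb, -, hb⟩ := exists_prod_eq_of_mul_t_mul hLz
  have hk : toAdd (X.normalForm z).head = toAdd (X.normalForm g).head + X.c * m := by omega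
  rw [X.prod_normalForm, hk] at hzb
  refine ⟨m, b, hk ▸ hz'.1, mem_upperBoundsIn.2 ⟨hb hz'.2, ?_⟩, hzb⟩
  have := (mem_upperBoundsIn.1 hz).2
  rw [hg, hzb, inv_mul_of_t_mul a b m rfl] at this
  simpa [mul_assoc] using this

theorem of_mul_mem_upperBoundsIn_of_le {a b : X.BSGroup} {m₀ m : ℤ} (hle : m₀ ≤ m)
    (hb : b ∈ upperBoundsIn X.cone (of (ofAdd (-(X.d * m))) * a)) :
    of (ofAdd (X.d * (m - m₀))) * b ∈
      upperBoundsIn X.cone (of (ofAdd (-(X.d * m₀))) * a) := by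
  rw [mem_upperBoundsIn] at hb ⊢
  refine ⟨X.cone.mul_mem (of_mem_cone_iff.2 ?_) hb.1, ?_⟩
  · rw [toAdd_ofAdd]
    exact mul_nonneg (by linarith [X.one_le_d]) (sub_nonneg.2 hle)
  · convert hb.2 using 1
    simp only [mul_inv_rev, ← map_inv, ← ofAdd_neg, neg_neg, ← mul_assoc, mul_left_inj]
    rw [mul_assoc, ← map_mul, ← ofAdd_add, mul_sub, add_sub_cancel]

theorem exists_upperBoundsIn_eq_smul_of_t_mul {a : X.BSGroup} (h : ℤ)
    (hdec : ∀ z ∈ upperBoundsIn X.cone (of (ofAdd h) * (t * a)), ∃ m b, 0 ≤ h + X.c * m ∧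
      b ∈ upperBoundsIn X.cone (of (ofAdd (-(X.d * m))) * a) ∧
      z = of (ofAdd (h + X.c * m)) * (t * b))
    (ih : ∀ m, (upperBoundsIn X.cone (of (ofAdd (-(X.d * m))) * a)).Nonempty →
      ∃ s : X.BSGroup, upperBoundsIn X.cone (of (ofAdd (-(X.d * m))) * a) =
        s • (X.cone : Set X.BSGroup))
    (hne : (upperBoundsIn X.cone (of (ofAdd h) * (t * a))).Nonempty) :
    ∃ s : X.BSGroup, upperBoundsIn X.cone (of (ofAdd h) * (t * a)) =
      s • (X.cone : Set X.BSGroup) := by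
  obtain ⟨z₀, hz₀⟩ := hne
  obtain ⟨m₁, b₁, hm₁, hb₁, -⟩ := hdec z₀ hz₀
  obtain ⟨m₀, ⟨hm₀, hne₀⟩, hmin⟩ := Int.exists_least_of_bdd
    (P := fun m => 0 ≤ h + X.c * m ∧
      (upperBoundsIn X.cone (of (ofAdd (-(X.d * m))) * a)).Nonempty)
    ⟨-|h|, fun m hm => by nlinarith [neg_abs_le h, le_abs_self h, hm.1, X.one_le_c]⟩
    ⟨m₁, hm₁, b₁, hb₁⟩
  obtain ⟨s', hs'⟩ := ih m₀ hne₀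
  refine ⟨of (ofAdd (h + X.c * m₀)) * (t * s'),
    upperBoundsIn_eq_smul (t_mul_mem_upperBoundsIn hm₀ (hs' ▸ self_mem_smul s'))
      fun z hz => ?_⟩
  obtain ⟨m, b, hm, hb, rfl⟩ := hdec z hz
  have hle : m₀ ≤ m := hmin m ⟨hm, b, hb⟩
  rw [inv_mul_of_t_mul s' b (m - m₀) (by ring)]
  have hshift := of_mul_mem_upperBoundsIn_of_le hle hb
  rw [hs'] at hshift
  exact Set.mem_smul_set_iff_inv_smul_mem.1 hshift

theorem exists_upperBoundsIn_eq_smul (g : X.BSGroup)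
    (hne : (upperBoundsIn X.cone g).Nonempty) :
    ∃ s : X.BSGroup, upperBoundsIn X.cone g = s • (X.cone : Set X.BSGroup) := by
  induction hn : (X.normalForm g).toList.length using Nat.strong_induction_on generalizing g with
  | _ n ih =>
  match hL : (X.normalForm g).toList with
  | [] => exact exists_upperBoundsIn_eq_smul_of_inv_mem (inv_mem_ofTMonoid (by simp [hL])) hne
  | (u, x) :: L =>
    rcases Int.units_eq_one_or u with rfl | rfl
    · obtain ⟨a, hga, haL, -⟩ := exists_prod_eq_of_mul_t_mul hL
      rw [X.prod_normalForm] at hga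
      have hlen : ∀ m, (X.normalForm (of (ofAdd (-(X.d * m))) * a)).toList.length < n := by
        intro m
        rw [normalForm_mul, of_smul_eq_smul, group_smul_toList, haL, ← hn, hL, List.length_cons]
        exact Nat.lt_succ_self _
      rw [hga] at hne ⊢
      exact exists_upperBoundsIn_eq_smul_of_t_mul _
        (fun z hz => exists_eq_t_mul_of_mem_upperBoundsIn hL hga (hga ▸ hz))
        (fun m hne' => ih _ (hlen m) _ hne' rfl) hne
    · obtain ⟨z, hz⟩ := hne
      exact exists_upperBoundsIn_eq_smul_of_inv_mem
        (inv_mem_ofTMonoid (letters_eq_neg_one_of_head_eq_neg_one hz (by simp [hL]))) ⟨z, hz⟩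

theorem eq_one_of_mem_cone_of_inv_mem_cone {x : X.BSGroup} (hx : x ∈ X.cone)
    (hx' : x⁻¹ ∈ X.cone) : x = 1 := by
  match hL : (X.normalForm x).toList with
  | [] =>
    rw [eq_of_head_of_toList_eq_nil hL] at hx hx' ⊢
    rw [← map_inv, of_mem_cone_iff, toAdd_inv] at hx'
    rw [of_mem_cone_iff] at hx
    rw [← map_one of]
    congr 1
    exact toAdd.injective (by rw [toAdd_one]; omega)
  | (u, y) :: L =>
    obtain rfl : u = 1 := (mem_cone_iff.1 hx).2 (u, y) (by simp [hL])
    have h1 : (1 : X.BSGroup) ∈ upperBoundsIn X.cone x :=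
      mem_upperBoundsIn.2 ⟨X.cone.one_mem, by rwa [mul_one]⟩
    exact absurd rfl (toList_ne_nil_and_dvd_of_mem_upperBoundsIn h1 hL).1

theorem isQLO_cone : IsQLO X.cone :=
  isQLO_of_upperBoundsIn_eq_smul (fun _ hx hx' => eq_one_of_mem_cone_of_inv_mem_cone hx hx')
    exists_upperBoundsIn_eq_smul

end BaumslagSolitarData

theorem stmt12 (c d : ℤ) (hc : 1 ≤ c) (hd : 1 ≤ d)
    -- P is the copy of ℕ inside ℤ (written multiplicatively)
    (P : Submonoid (Multiplicative ℤ))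
    (hP : ∀ x : Multiplicative ℤ, x ∈ P ↔ 0 ≤ Multiplicative.toAdd x)
    -- A = dℤ and B = cℤ
    (A B : Subgroup (Multiplicative ℤ))
    (hA : ∀ x : Multiplicative ℤ, x ∈ A ↔ ∃ m : ℤ, Multiplicative.toAdd x = d * m)
    (hB : ∀ x : Multiplicative ℤ, x ∈ B ↔ ∃ m : ℤ, Multiplicative.toAdd x = c * m)
    -- φ : A → B, φ(dm) = cm
    (φ : A ≃* B)
    (hφ : ∀ (x : A) (m : ℤ), Multiplicative.toAdd (x : Multiplicative ℤ) = d * m →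
      Multiplicative.toAdd ((φ x : B) : Multiplicative ℤ) = c * m) :
    QLO.IsQLO (Submonoid.closure
      ((HNNExtension.of '' (P : Set (Multiplicative ℤ))) ∪
        {HNNExtension.t (φ := φ)})) := by
  have hP' : (P : Set (Multiplicative ℤ)) = {x | 0 ≤ toAdd x} := Set.ext hP
  rw [hP']
  exact BaumslagSolitarData.isQLO_cone (X := ⟨c, d, hc, hd, A, B, hA, hB, φ, hφ⟩)
end

section
/- Fix integers a, b, c, d ≥ 1. Consider the quasi-lattice ordered group (ℤ², ℕ²) (componentwise order), with subgroups A = {(am, bn) : m, n ∈ ℤ} and B = {(cm, dn) : m, n ∈ ℤ} of ℤ², and the group isomorphism φ : A → B given by φ(am, bn) = (cm, dn). Let ℤ²* be the HNN extension of ℤ² with respect to A, B, φ, and let ℕ²* be the submonoid of ℤ²* generated by of(ℕ²) and t. Then (ℤ²*, ℕ²*) is quasi-lattice ordered: ℕ²* ∩ (ℕ²*)⁻¹ = {e}, and every pair of elements of ℤ²* with a common upper bound in ℕ²* (for the order u ≤ v iff u⁻¹v ∈ ℕ²*) has a least common upper bound in ℕ²*. -/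
namespace QLO

variable {G : Type*} [Group G] {P : Submonoid G}

theorem le_refl_s13 (x : G) : QLO.le P x x := by
  simp [QLO.le, P.one_mem]

theorem le_mul_left_iff (g x y : G) : QLO.le P (g * x) (g * y) ↔ QLO.le P x y := by
  simp only [QLO.le, mul_inv_rev, mul_assoc, inv_mul_cancel_left]

theorem exists_isLub_of_forall_exists_le_iff
    (h : ∀ u z, z ∈ P → QLO.le P u z → ∃ σ, ∀ z', z' ∈ P ∧ QLO.le P u z' ↔ QLO.le P σ z')
    (x y : G) (hxy : ∃ z ∈ P, QLO.le P x z ∧ QLO.le P y z) : ∃ w, QLO.IsLub P x y w := by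
  obtain ⟨z, hz, hxz, hyz⟩ := hxy
  obtain ⟨σ₁, hσ₁⟩ := h x z hz hxz
  obtain ⟨σ₂, hσ₂⟩ := h (σ₁⁻¹ * y) (σ₁⁻¹ * z) ((hσ₁ z).1 ⟨hz, hxz⟩)
    (by rwa [le_mul_left_iff])
  have key : ∀ z', z' ∈ P ∧ QLO.le P x z' ∧ QLO.le P y z' ↔ QLO.le P (σ₁ * σ₂) z' := by
    intro z'
    rw [← and_assoc, hσ₁, ← le_mul_left_iff σ₁⁻¹ y, ← le_mul_left_iff σ₁⁻¹ (σ₁ * σ₂),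
      inv_mul_cancel_left, ← hσ₂]
    rfl
  obtain ⟨hP, hx, hy⟩ := (key _).2 (QLO.le_refl_s13 _)
  exact ⟨σ₁ * σ₂, hP, hx, hy, fun z' hz' hx' hy' => (key z').1 ⟨hz', hx', hy'⟩⟩

end QLO

namespace HNNExtension

variable {G : Type*} [Group G] {A B : Subgroup G} {φ : A ≃* B} {P : Submonoid G}

open NormalWord

variable (φ) in
def cone (P : Submonoid G) : Submonoid (HNNExtension G A B φ) :=
  Submonoid.closure (of '' (P : Set G) ∪ {t})

theorem of_mem_cone {g : G} (hg : g ∈ P) : of g ∈ cone φ P :=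
  Submonoid.subset_closure (Or.inl ⟨g, hg, rfl⟩)

theorem t_mem_cone (P : Submonoid G) : t ∈ cone φ P :=
  Submonoid.subset_closure (Or.inr rfl)

theorem cone_le_cone_top (P : Submonoid G) : cone φ P ≤ cone φ ⊤ :=
  Submonoid.closure_mono (Set.union_subset_union_left _ (Set.image_mono le_top))

theorem mem_cone_top_cases {x : HNNExtension G A B φ} (hx : x ∈ cone φ ⊤) :
    (∃ g, x = of g) ∨ ∃ k, ∃ z ∈ cone φ ⊤, x = of k * t * z := by
  induction hx using Submonoid.closure_induction_left with
  | one => exact Or.inl ⟨1, (map_one of).symm⟩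
  | mul_left y hy z hz ih =>
    rcases hy with ⟨g, -, rfl⟩ | rfl
    · rcases ih with ⟨h, rfl⟩ | ⟨k, z', hz', rfl⟩
      · exact Or.inl ⟨g * h, (map_mul of g h).symm⟩
      · exact Or.inr ⟨g * k, z', hz', by simp [mul_assoc]⟩
    · exact Or.inr ⟨1, z, hz, by simp⟩

variable (φ) in
def tDegree : HNNExtension G A B φ →* Multiplicative ℤ :=
  lift 1 (Multiplicative.ofAdd 1) fun _ => by simp

theorem tDegree_of (g : G) : tDegree φ (of g) = 1 := lift_of ..

theorem tDegree_t : tDegree φ t = Multiplicative.ofAdd 1 := lift_t ..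

theorem exists_eq_of_or_one_lt_tDegree {x : HNNExtension G A B φ} (hx : x ∈ cone φ P) :
    (∃ g ∈ P, x = of g) ∨ 1 < tDegree φ x := by
  induction hx using Submonoid.closure_induction_left with
  | one => exact Or.inl ⟨1, P.one_mem, (map_one of).symm⟩
  | mul_left y hy z hz ih =>
    rcases hy with ⟨g, hg, rfl⟩ | rfl
    · rcases ih with ⟨h, hh, rfl⟩ | ih
      · exact Or.inl ⟨g * h, P.mul_mem hg hh, (map_mul of g h).symm⟩
      · exact Or.inr (by rwa [map_mul, tDegree_of, one_mul])
    · right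
      rw [map_mul, tDegree_t]
      refine Left.one_lt_mul_of_lt_of_le (by decide) ?_
      rcases ih with ⟨h, -, rfl⟩ | ih
      · exact (tDegree_of h).ge
      · exact ih.le

theorem eq_one_of_mem_cone_of_inv_mem_cone (hP : ∀ g ∈ P, g⁻¹ ∈ P → g = 1)
    {x : HNNExtension G A B φ} (hx : x ∈ cone φ P) (hx' : x⁻¹ ∈ cone φ P) : x = 1 := by
  rcases exists_eq_of_or_one_lt_tDegree hx with ⟨g, hg, rfl⟩ | hdeg
  · rcases exists_eq_of_or_one_lt_tDegree hx' with ⟨g', hg', hgg'⟩ | hdeg'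
    · rw [← map_inv] at hgg'
      obtain rfl := of_injective φ hgg'
      rw [hP g hg hg', map_one]
    · simp [tDegree_of] at hdeg'
  · rcases exists_eq_of_or_one_lt_tDegree hx' with ⟨g', -, hgg'⟩ | hdeg'
    · rw [inv_eq_iff_eq_inv] at hgg'
      simp [hgg', tDegree_of] at hdeg
    · rw [map_inv, one_lt_inv'] at hdeg'
      exact absurd hdeg (not_lt.2 hdeg'.le)

theorem isChain_of_forall_fst_eq_one {L : List (ℤˣ × G)} (hL : ∀ p ∈ L, p.1 = 1) :
    L.IsChain fun p q => p.2 ∈ toSubgroup A B p.1 → p.1 = q.1 := by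
  refine (List.pairwise_of_forall_mem_list ?_).isChain
  exact fun p hp q hq _ => (hL p hp).trans (hL q hq).symm

theorem exists_reducedWord_of_mem_cone_top {x : HNNExtension G A B φ} (hx : x ∈ cone φ ⊤) :
    ∃ w : ReducedWord G A B, w.prod φ = x ∧ ∀ p ∈ w.toList, p.1 = 1 := by
  induction hx using Submonoid.closure_induction_left with
  | one => exact ⟨ReducedWord.empty G A B, by simp [ReducedWord.prod], by simp⟩
  | mul_left y hy z hz ih =>
    obtain ⟨w, rfl, hw⟩ := ih
    rcases hy with ⟨g, -, rfl⟩ | rfl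
    · exact ⟨{ w with head := g * w.head }, by simp [ReducedWord.prod, mul_assoc], hw⟩
    · have hL : ∀ p ∈ (1, w.head) :: w.toList, p.1 = 1 := by simpa using hw
      exact ⟨⟨1, _, isChain_of_forall_fst_eq_one hL⟩, by simp [ReducedWord.prod, mul_assoc], hL⟩

theorem ReducedWord.forall_fst_eq_one_of_prod_mem (w : ReducedWord G A B)
    (hw : w.prod φ ∈ cone φ ⊤) : ∀ p ∈ w.toList, p.1 = 1 := by
  obtain ⟨w', hw', hpos⟩ := exists_reducedWord_of_mem_cone_top hw
  have hfst := (ReducedWord.map_fst_eq_and_of_prod_eq φ hw'.symm).1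
  intro p hp
  obtain ⟨q, hq, hqp⟩ := List.mem_map.1 (hfst ▸ List.mem_map_of_mem (f := Prod.fst) hp)
  exact hqp ▸ hpos q hq

theorem NormalWord.forall_fst_eq_one_of_mem_cone_top {d : TransversalPair G A B}
    {x : HNNExtension G A B φ} (hx : x ∈ cone φ ⊤) :
    ∀ p ∈ (x • (NormalWord.empty : NormalWord d)).toList, p.1 = 1 :=
  ReducedWord.forall_fst_eq_one_of_prod_mem (φ := φ) _ (by simpa using hx)

theorem NormalWord.t_smul_of_forall_fst_eq_one {d : TransversalPair G A B} (w : NormalWord d)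
    (hw : ∀ p ∈ w.toList, p.1 = 1) :
    ((t : HNNExtension G A B φ) • w).head = toSubgroupEquiv φ 1 ((d.compl 1).equiv w.head).1 ∧
      ((t : HNNExtension G A B φ) • w).toList =
        ((1 : ℤˣ), (((d.compl 1).equiv w.head).2 : G)) :: w.toList := by
  have hcancel : ¬ Cancels 1 w := by
    rintro ⟨-, h⟩
    obtain ⟨p, hp, hp1⟩ : ∃ p ∈ w.toList, p.1 = -1 := by
      cases hl : w.toList with
      | nil => simp [hl] at h
      | cons p l => exact ⟨p, by simp, by simpa [hl] using h⟩
    exact absurd (hp1.symm.trans (hw p hp)) (by decide)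
  rw [t_smul_eq_unitsSMul, unitsSMul, dif_neg hcancel]
  simp [unitsSMulGroup]

theorem exists_eq_t_mul_of_mul_inv_t_mul_mem (w : ReducedWord G A B)
    (hw : ∀ p ∈ w.toList.getLast?, p.2 ∈ toSubgroup A B p.1 → p.1 = -1)
    {y : HNNExtension G A B φ} (hy : y ∈ cone φ ⊤) (hwy : w.prod φ * t⁻¹ * y ∈ cone φ ⊤) :
    ∃ η ∈ cone φ ⊤, y = t * η := by
  -- Unless `y = of k * t * z` with `k ∈ B`, concatenating `w`, `t⁻¹` and a positive word for `y`
  -- gives a reduced word for `w t⁻¹ y` containing `t⁻¹`.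
  have key : ∀ (g : G) (L : List (ℤˣ × G)),
      ((-1, g) :: L).IsChain (fun p q => p.2 ∈ toSubgroup A B p.1 → p.1 = q.1) →
      y ≠ of g * (L.map fun p => t ^ (p.1 : ℤ) * of p.2).prod := by
    rintro g L hL rfl
    have hpos := ReducedWord.forall_fst_eq_one_of_prod_mem (φ := φ)
      ⟨w.head, w.toList ++ (-1, g) :: L, List.isChain_append.2 ⟨w.chain, hL, ?_⟩⟩ ?_ (-1, g)
      (by simp)
    · exact absurd hpos (by decide : (-1 : ℤˣ) ≠ 1)
    · intro p hp q hq
      obtain rfl : q = (-1, g) := by simpa using hq.symm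
      exact hw p hp
    · convert hwy using 1
      simp [ReducedWord.prod, mul_assoc]
  rcases mem_cone_top_cases hy with ⟨g, rfl⟩ | ⟨k, z, hz, rfl⟩
  · exact absurd (by simp) (key g [] (List.isChain_singleton _))
  by_cases hk : k ∈ B
  · refine ⟨of (φ.symm ⟨k, hk⟩ : G) * z,
      Submonoid.mul_mem _ (of_mem_cone (Submonoid.mem_top _)) hz, ?_⟩
    rw [← mul_assoc, t_mul_of, MulEquiv.apply_symm_apply]
  · obtain ⟨v, rfl, hv⟩ := exists_reducedWord_of_mem_cone_top hz
    refine absurd ?_ (key k ((1, v.head) :: v.toList) ?_)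
    · simp [ReducedWord.prod, mul_assoc]
    · exact List.isChain_cons_cons.2 ⟨fun h => absurd h hk,
        isChain_of_forall_fst_eq_one (by simpa using hv)⟩

def HasPrincipalFiber (P : Submonoid G) (v : HNNExtension G A B φ) : Prop :=
  (∀ y ∈ cone φ ⊤, v * y ∉ cone φ P) ∨
    ∃ w ∈ cone φ ⊤, ∀ y ∈ cone φ ⊤, v * y ∈ cone φ P ↔ w⁻¹ * y ∈ cone φ P

theorem hasPrincipalFiber_one (P : Submonoid G) :
    HasPrincipalFiber P (1 : HNNExtension G A B φ) :=
  Or.inr ⟨1, Submonoid.one_mem _, by simp⟩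

theorem HasPrincipalFiber.mul_of {v : HNNExtension G A B φ} (hv : HasPrincipalFiber P v)
    (s : G) : HasPrincipalFiber P (v * of s) := by
  have hs {y} (hy : y ∈ cone φ ⊤) : of s * y ∈ cone φ ⊤ :=
    Submonoid.mul_mem _ (of_mem_cone (Submonoid.mem_top s)) hy
  rcases hv with hv | ⟨w, hw, hv⟩
  · exact Or.inl fun y hy => by simpa [mul_assoc] using hv _ (hs hy)
  · refine Or.inr ⟨of s⁻¹ * w, Submonoid.mul_mem _ (of_mem_cone (Submonoid.mem_top _)) hw,
      fun y hy => ?_⟩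
    rw [mul_assoc, hv _ (hs hy)]
    simp [mul_assoc]

theorem HasPrincipalFiber.mul_inv_t (w : ReducedWord G A B)
    (hw : ∀ p ∈ w.toList.getLast?, p.2 ∈ toSubgroup A B p.1 → p.1 = -1)
    (hv : HasPrincipalFiber P (w.prod φ)) : HasPrincipalFiber P (w.prod φ * t⁻¹) := by
  have hcancel {y} (hy : y ∈ cone φ ⊤) (h : w.prod φ * t⁻¹ * y ∈ cone φ P) :
      ∃ η ∈ cone φ ⊤, y = t * η :=
    exists_eq_t_mul_of_mul_inv_t_mul_mem w hw hy (cone_le_cone_top P h)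
  rcases hv with hv | ⟨u, hu, hv⟩
  · refine Or.inl fun y hy h => ?_
    obtain ⟨η, hη, rfl⟩ := hcancel hy h
    exact hv η hη (by simpa [mul_assoc] using h)
  · refine Or.inr ⟨t * u, Submonoid.mul_mem _ (t_mem_cone ⊤) hu,
      fun y hy => ⟨fun h => ?_, fun h => ?_⟩⟩
    · obtain ⟨η, hη, rfl⟩ := hcancel hy h
      simpa [mul_assoc] using (hv η hη).1 (by simpa [mul_assoc] using h)
    · have := (hv _ (Submonoid.mul_mem _ hu (cone_le_cone_top P h))).2 (by simpa using h)
      simpa [mul_assoc] using this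

theorem hasPrincipalFiber_of_forall_mul_t
    (hstep : ∀ v : HNNExtension G A B φ, HasPrincipalFiber P v → HasPrincipalFiber P (v * t))
    (v : HNNExtension G A B φ) : HasPrincipalFiber P v := by
  obtain ⟨d⟩ := TransversalPair.nonempty G A B
  suffices ∀ w : ReducedWord G A B, HasPrincipalFiber P (w.prod φ) by
    simpa using this (v • (NormalWord.empty : NormalWord d)).toReducedWord
  rintro ⟨h, L, hL⟩
  induction L using List.reverseRecOn with
  | nil => simpa [ReducedWord.prod] using (hasPrincipalFiber_one P).mul_of h
  | append_singleton L p ih =>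
    obtain ⟨hL', -, hjunc⟩ := List.isChain_append.1 hL
    have hprod : ReducedWord.prod φ ⟨h, L ++ [p], hL⟩ =
        ReducedWord.prod φ ⟨h, L, hL'⟩ * t ^ (p.1 : ℤ) * of p.2 := by
      simp [ReducedWord.prod, mul_assoc]
    rw [hprod]
    refine HasPrincipalFiber.mul_of ?_ p.2
    rcases Int.units_eq_one_or p.1 with h1 | h1 <;> rw [h1]
    · simpa using hstep _ (ih hL')
    · simpa using (ih hL').mul_inv_t ⟨h, L, hL'⟩
        fun q hq hmem => (hjunc q hq p rfl hmem).trans h1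

end HNNExtension

theorem Int.mul_neg_ediv_neg_le_iff {a c : ℤ} (ha : 0 < a) (hc : 0 < c) (q h : ℤ) :
    a * -(-q / c) ≤ h ↔ q ≤ c * (h / a) := by
  rw [mul_comm, ← Int.le_ediv_iff_mul_le ha, neg_le, Int.le_ediv_iff_mul_le hc, neg_mul,
    neg_le_neg_iff, mul_comm]

namespace LatticeHNN

open Multiplicative HNNExtension NormalWord

local notation "ℤ²" => Multiplicative (ℤ × ℤ)

local notation "ℕ²" => Submonoid.oneLE (Multiplicative (ℤ × ℤ))

def lattice (p q : ℤ) : Subgroup ℤ² :=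
  AddSubgroup.toSubgroup ((AddSubgroup.zmultiples p).prod (AddSubgroup.zmultiples q))

theorem mem_lattice {p q : ℤ} {x : ℤ²} :
    x ∈ lattice p q ↔ ∃ m n : ℤ, toAdd x = (p * m, q * n) := by
  simp [lattice, AddSubgroup.mem_prod, Int.mem_zmultiples_iff, Prod.ext_iff, dvd_def, eq_comm]

def rem (p q : ℤ) (x : ℤ²) : ℤ² := ofAdd ((toAdd x).1 % p, (toAdd x).2 % q)

def scale (p q r s : ℤ) (x : ℤ²) : ℤ² := ofAdd (r * ((toAdd x).1 / p), s * ((toAdd x).2 / q))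

-- `-(-x / p)` is `⌈x / p⌉`, as `Int` division rounds down.
def scaleCeil (p q r s : ℤ) (x : ℤ²) : ℤ² :=
  ofAdd (r * -(-(toAdd x).1 / p), s * -(-(toAdd x).2 / q))

theorem scale_mul_rem (p q : ℤ) (x : ℤ²) : scale p q p q x * rem p q x = x := by
  apply toAdd.injective
  ext <;> simp [scale, rem, Int.mul_ediv_add_emod]

@[simp]
theorem scale_one (p q r s : ℤ) : scale p q r s 1 = 1 := by
  simp [scale]

theorem scale_mem_lattice (p q r s : ℤ) (x : ℤ²) : scale p q r s x ∈ lattice r s :=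
  mem_lattice.2 ⟨_, _, rfl⟩

theorem isComplement_lattice_range_rem (p q : ℤ) :
    Subgroup.IsComplement (lattice p q : Set ℤ²) (Set.range (rem p q)) := by
  rw [Subgroup.isComplement_iff_existsUnique_mul_inv_mem]
  intro x
  refine ⟨⟨rem p q x, x, rfl⟩, ?_, ?_⟩
  · have : x * (rem p q x)⁻¹ = scale p q p q x := by
      rw [eq_comm, eq_mul_inv_iff_mul_eq, scale_mul_rem]
    show x * (rem p q x)⁻¹ ∈ lattice p q
    rw [this]
    exact scale_mem_lattice p q p q x
  · rintro ⟨_, y, rfl⟩ hy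
    obtain ⟨m, n, hmn⟩ := mem_lattice.1 hy
    simp only [rem, toAdd_mul, toAdd_inv, toAdd_ofAdd, Prod.ext_iff, Prod.fst_add, Prod.snd_add,
      Prod.fst_neg, Prod.snd_neg] at hmn
    have h1 : (toAdd x).1 = (toAdd y).1 % p + p * m := by omega
    have h2 : (toAdd x).2 = (toAdd y).2 % q + q * n := by omega
    ext : 1
    apply toAdd.injective
    ext <;> simp [rem, h1, h2]

-- For positive moduli, `Set.range (rem a b)` is the box `[0, a) × [0, b)`.
def remTransversal (a b c d : ℤ) : TransversalPair ℤ² (lattice a b) (lattice c d) where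
  set u := if u = 1 then Set.range (rem a b) else Set.range (rem c d)
  compl u := by
    rcases Int.units_eq_one_or u with rfl | rfl
    · simpa using isComplement_lattice_range_rem a b
    · simpa [toSubgroup_neg_one] using isComplement_lattice_range_rem c d

theorem remTransversal_compl_one_equiv {a b c d : ℤ} (x : ℤ²) :
    ((((remTransversal a b c d).compl 1).equiv x).1 : ℤ²) = scale a b a b x ∧
      ((((remTransversal a b c d).compl 1).equiv x).2 : ℤ²) = rem a b x := by
  have hx : ((remTransversal a b c d).compl 1).equiv x =
      (⟨scale a b a b x, scale_mem_lattice a b a b x⟩, ⟨rem a b x, by simp [remTransversal]⟩) := by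
    rw [← Equiv.eq_symm_apply, Subgroup.IsComplement.equiv_symm_apply, scale_mul_rem]
  rw [hx]
  exact ⟨rfl, rfl⟩

variable {a b c d : ℤ} {φ : lattice a b ≃* lattice c d}

def IsScaling (φ : lattice a b ≃* lattice c d) : Prop :=
  ∀ (x : lattice a b) (m n : ℤ), toAdd (x : ℤ²) = (a * m, b * n) →
    toAdd (φ x : ℤ²) = (c * m, d * n)

theorem IsScaling.apply_scale (hφ : IsScaling φ) (x : ℤ²) :
    (φ ⟨scale a b a b x, scale_mem_lattice a b a b x⟩ : ℤ²) = scale a b c d x :=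
  toAdd.injective (hφ _ _ _ rfl)

noncomputable def normalWord (x : HNNExtension ℤ² (lattice a b) (lattice c d) φ) :
    NormalWord (remTransversal a b c d) :=
  x • NormalWord.empty

noncomputable def head (x : HNNExtension ℤ² (lattice a b) (lattice c d) φ) : ℤ² :=
  (normalWord x).head

@[simp]
theorem head_of_mul (g : ℤ²) (x : HNNExtension ℤ² (lattice a b) (lattice c d) φ) :
    head (of g * x) = g * head x := by
  simp [head, normalWord, mul_smul, of_smul_eq_smul]

@[simp]
theorem head_one : head (1 : HNNExtension ℤ² (lattice a b) (lattice c d) φ) = 1 := by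
  simp [head, normalWord]

@[simp]
theorem head_of (g : ℤ²) : head (of g : HNNExtension ℤ² (lattice a b) (lattice c d) φ) = g := by
  simpa using head_of_mul (φ := φ) g 1

theorem head_t_mul (hφ : IsScaling φ) {x : HNNExtension ℤ² (lattice a b) (lattice c d) φ}
    (hx : x ∈ cone φ ⊤) : head (t * x) = scale a b c d (head x) := by
  have hhead := (t_smul_of_forall_fst_eq_one (φ := φ) (normalWord x)
    (forall_fst_eq_one_of_mem_cone_top hx)).1
  rw [head, normalWord, mul_smul, ← normalWord, hhead, ← hφ.apply_scale]
  exact congrArg (fun y => (φ y : ℤ²)) (Subtype.ext (remTransversal_compl_one_equiv (head x)).1)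

theorem gc_scaleCeil_scale (ha : 0 < a) (hb : 0 < b) (hc : 0 < c) (hd : 0 < d) :
    GaloisConnection (scaleCeil c d a b) (scale a b c d) := fun _ _ =>
  and_congr (Int.mul_neg_ediv_neg_le_iff ha hc _ _) (Int.mul_neg_ediv_neg_le_iff hb hd _ _)

theorem one_le_rem (ha : a ≠ 0) (hb : b ≠ 0) (x : ℤ²) : 1 ≤ rem a b x :=
  ⟨Int.emod_nonneg _ ha, Int.emod_nonneg _ hb⟩

theorem mem_cone_oneLE_iff (ha : 0 < a) (hb : 0 < b) (hc : 0 < c) (hd : 0 < d)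
    (hφ : IsScaling φ) {x : HNNExtension ℤ² (lattice a b) (lattice c d) φ} :
    x ∈ cone φ ℕ² ↔ x ∈ cone φ ⊤ ∧ 1 ≤ head x := by
  constructor
  · intro hx
    refine ⟨cone_le_cone_top _ hx, ?_⟩
    induction hx using Submonoid.closure_induction_left with
    | one => simp
    | mul_left y hy z hz ih =>
      rcases hy with ⟨g, hg, rfl⟩ | rfl
      · simpa using one_le_mul hg ih
      · rw [head_t_mul hφ (cone_le_cone_top _ hz)]
        simpa using (gc_scaleCeil_scale ha hb hc hd).monotone_u ih
  · rintro ⟨hx, hhead⟩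
    have hprod : (normalWord x).prod φ = x := by simp [normalWord]
    rw [← hprod, ReducedWord.prod]
    refine Submonoid.mul_mem _ (of_mem_cone hhead) (Submonoid.list_prod_mem _ ?_)
    simp only [List.mem_map]
    rintro _ ⟨p, hp, rfl⟩
    have hset := (normalWord x).mem_set p.1 p.2 hp
    rw [forall_fst_eq_one_of_mem_cone_top hx p hp] at hset ⊢
    obtain ⟨y, hy⟩ : p.2 ∈ Set.range (rem a b) := by simpa [remTransversal] using hset
    rw [← hy]
    simpa using Submonoid.mul_mem _ (t_mem_cone _) (of_mem_cone (one_le_rem ha.ne' hb.ne' y))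

theorem inv_of_mul_mem_cone_oneLE_iff (ha : 0 < a) (hb : 0 < b) (hc : 0 < c) (hd : 0 < d)
    (hφ : IsScaling φ) {x : HNNExtension ℤ² (lattice a b) (lattice c d) φ} (hx : x ∈ cone φ ⊤)
    (g : ℤ²) : (of g)⁻¹ * x ∈ cone φ ℕ² ↔ g ≤ head x := by
  rw [mem_cone_oneLE_iff ha hb hc hd hφ, ← map_inv, head_of_mul, le_inv_mul_iff_mul_le, mul_one,
    and_iff_right (Submonoid.mul_mem _ (of_mem_cone (Submonoid.mem_top _)) hx)]

theorem head_mul (hφ : IsScaling φ) {x y : HNNExtension ℤ² (lattice a b) (lattice c d) φ}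
    (hx : x ∈ cone φ ⊤) (hy : y ∈ cone φ ⊤) : head (x * y) = head (x * of (head y)) := by
  induction hx using Submonoid.closure_induction_left with
  | one => simp
  | mul_left z hz x hx ih =>
    rcases hz with ⟨g, -, rfl⟩ | rfl
    · simp [mul_assoc, ih]
    · have hxg : x * of (head y) ∈ cone φ ⊤ :=
        Submonoid.mul_mem _ hx (of_mem_cone (Submonoid.mem_top _))
      rw [mul_assoc, head_t_mul hφ (Submonoid.mul_mem _ hx hy), ih, mul_assoc, head_t_mul hφ hxg]

theorem exists_galoisConnection_head_mul_of (ha : 0 < a) (hb : 0 < b) (hc : 0 < c) (hd : 0 < d)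
    (hφ : IsScaling φ) {x : HNNExtension ℤ² (lattice a b) (lattice c d) φ}
    (hx : x ∈ cone φ ⊤) : ∃ l : ℤ² → ℤ², GaloisConnection l fun h => head (x * of h) := by
  induction hx using Submonoid.closure_induction_left with
  | one => exact ⟨id, by simp only [one_mul, head_of]; exact GaloisConnection.id⟩
  | mul_left z hz x hx ih =>
    obtain ⟨l, hl⟩ := ih
    rcases hz with ⟨g, -, rfl⟩ | rfl
    · have hmul : GaloisConnection (g⁻¹ * ·) (g * ·) := fun _ _ => inv_mul_le_iff_le_mul
      exact ⟨_, by simpa [mul_assoc, Function.comp_def] using hmul.compose hl⟩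
    · have hxh (h : ℤ²) : x * of h ∈ cone φ ⊤ :=
        Submonoid.mul_mem _ hx (of_mem_cone (Submonoid.mem_top _))
      exact ⟨_, by simpa [mul_assoc, Function.comp_def, head_t_mul hφ (hxh _)] using
        (gc_scaleCeil_scale ha hb hc hd).compose hl⟩

theorem exists_forall_le_iff_le_and_le (p q : ℤ²) : ∃ m : ℤ², ∀ h, m ≤ h ↔ p ≤ h ∧ q ≤ h :=
  ⟨ofAdd (toAdd p ⊔ toAdd q), fun h => sup_le_iff (c := toAdd h)⟩

theorem exists_forall_mem_cone_and_inv_mul_mem_iff (ha : 0 < a) (hb : 0 < b) (hc : 0 < c)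
    (hd : 0 < d)
    (hφ : IsScaling φ) {w : HNNExtension ℤ² (lattice a b) (lattice c d) φ} (hw : w ∈ cone φ ⊤) :
    ∃ σ, ∀ z, z ∈ cone φ ℕ² ∧ w⁻¹ * z ∈ cone φ ℕ² ↔
      σ⁻¹ * z ∈ cone φ ℕ² := by
  obtain ⟨l, hl⟩ := exists_galoisConnection_head_mul_of ha hb hc hd hφ hw
  obtain ⟨m, hm⟩ := exists_forall_le_iff_le_and_le 1 (l 1)
  -- Writing `z = w p`, both conditions say `1 ≤ head p` and `l 1 ≤ head p`, that is `m ≤ head p`.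
  refine ⟨w * of m, fun z => ?_⟩
  obtain ⟨p, rfl⟩ : ∃ p, z = w * p := ⟨w⁻¹ * z, by group⟩
  rw [inv_mul_cancel_left, mul_inv_rev, mul_assoc, inv_mul_cancel_left]
  constructor
  · rintro ⟨hwp, hp⟩
    have hpQ := cone_le_cone_top _ hp
    rw [inv_of_mul_mem_cone_oneLE_iff ha hb hc hd hφ hpQ, hm, hl]
    dsimp only
    rw [← head_mul hφ hw hpQ]
    exact ⟨((mem_cone_oneLE_iff ha hb hc hd hφ).1 hp).2,
      ((mem_cone_oneLE_iff ha hb hc hd hφ).1 hwp).2⟩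
  · intro h
    have hpQ : p ∈ cone φ ⊤ := by
      simpa using Submonoid.mul_mem _ (of_mem_cone (Submonoid.mem_top m)) (cone_le_cone_top _ h)
    rw [inv_of_mul_mem_cone_oneLE_iff ha hb hc hd hφ hpQ, hm, hl] at h
    dsimp only at h
    rw [← head_mul hφ hw hpQ] at h
    rw [mem_cone_oneLE_iff ha hb hc hd hφ, mem_cone_oneLE_iff ha hb hc hd hφ]
    exact ⟨⟨Submonoid.mul_mem _ hw hpQ, h.2⟩, hpQ, h.1⟩

theorem HasPrincipalFiber.mul_t (ha : 0 < a) (hb : 0 < b) (hc : 0 < c) (hd : 0 < d)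
    (hφ : IsScaling φ) {v : HNNExtension ℤ² (lattice a b) (lattice c d) φ}
    (hv : HasPrincipalFiber ℕ² v) :
    HasPrincipalFiber ℕ² (v * t) := by
  have htQ {y} (hy : y ∈ cone φ ⊤) : t * y ∈ cone φ ⊤ := Submonoid.mul_mem _ (t_mem_cone ⊤) hy
  rcases hv with hv | ⟨w, hw, hv⟩
  · exact Or.inl fun y hy => by simpa [mul_assoc] using hv _ (htQ hy)
  rcases mem_cone_top_cases hw with ⟨q, rfl⟩ | ⟨k, z, hz, rfl⟩
  · refine Or.inr ⟨of (scaleCeil c d a b q), of_mem_cone (Submonoid.mem_top _), fun y hy => ?_⟩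
    rw [mul_assoc, hv _ (htQ hy), inv_of_mul_mem_cone_oneLE_iff ha hb hc hd hφ (htQ hy),
      head_t_mul hφ hy, ← gc_scaleCeil_scale ha hb hc hd,
      ← inv_of_mul_mem_cone_oneLE_iff ha hb hc hd hφ hy]
  by_cases hk : k ∈ lattice c d
  · refine Or.inr ⟨of (φ.symm ⟨k, hk⟩ : ℤ²) * z,
      Submonoid.mul_mem _ (of_mem_cone (Submonoid.mem_top _)) hz, fun y hy => ?_⟩
    have hw : of k * t * z = t * (of (φ.symm ⟨k, hk⟩ : ℤ²) * z) := by
      rw [← mul_assoc, t_mul_of, MulEquiv.apply_symm_apply]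
    rw [mul_assoc, hv _ (htQ hy), hw, mul_inv_rev, mul_assoc, inv_mul_cancel_left]
  · -- The head of `t y` lies in `lattice c d`, but that of `of k * t * z * p` in `k • lattice c d`.
    refine Or.inl fun y hy hmem => hk ?_
    obtain ⟨p, hp, hyp⟩ : ∃ p ∈ cone φ ℕ², t * y = of k * t * z * p :=
      ⟨_, (hv _ (htQ hy)).1 (by rwa [← mul_assoc]), by group⟩
    have hhead := congrArg head hyp
    rw [head_t_mul hφ hy, mul_assoc, mul_assoc, head_of_mul,
      head_t_mul hφ (Submonoid.mul_mem _ hz (cone_le_cone_top _ hp))] at hhead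
    rw [eq_mul_inv_of_mul_eq hhead.symm]
    exact Subgroup.mul_mem _ (scale_mem_lattice ..) (Subgroup.inv_mem _ (scale_mem_lattice ..))

theorem exists_forall_mem_and_le_iff (ha : 0 < a) (hb : 0 < b) (hc : 0 < c) (hd : 0 < d)
    (hφ : IsScaling φ) (u z : HNNExtension ℤ² (lattice a b) (lattice c d) φ)
    (hz : z ∈ cone φ ℕ²) (huz : QLO.le (cone φ ℕ²) u z) :
    ∃ σ, ∀ z', z' ∈ cone φ ℕ² ∧ QLO.le (cone φ ℕ²) u z' ↔
      QLO.le (cone φ ℕ²) σ z' := by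
  rcases hasPrincipalFiber_of_forall_mul_t (fun _ => HasPrincipalFiber.mul_t ha hb hc hd hφ) u⁻¹
    with hu | ⟨w, hw, hu⟩
  · exact absurd huz (hu z (cone_le_cone_top _ hz))
  obtain ⟨σ, hσ⟩ := exists_forall_mem_cone_and_inv_mul_mem_iff ha hb hc hd hφ hw
  exact ⟨σ, fun z' => by
    rw [QLO.le, QLO.le, ← hσ]
    exact and_congr_right fun h => hu z' (cone_le_cone_top _ h)⟩

end LatticeHNN

theorem stmt13 (a b c d : ℤ) (ha : 1 ≤ a) (hb : 1 ≤ b) (hc : 1 ≤ c) (hd : 1 ≤ d)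
    -- P is the copy of ℕ² inside ℤ² (written multiplicatively)
    (P : Submonoid (Multiplicative (ℤ × ℤ)))
    (hP : ∀ x : Multiplicative (ℤ × ℤ), x ∈ P ↔
      0 ≤ (Multiplicative.toAdd x).1 ∧ 0 ≤ (Multiplicative.toAdd x).2)
    -- A = {(am, bn)} and B = {(cm, dn)}
    (A B : Subgroup (Multiplicative (ℤ × ℤ)))
    (hA : ∀ x : Multiplicative (ℤ × ℤ), x ∈ A ↔
      ∃ m n : ℤ, Multiplicative.toAdd x = (a * m, b * n))
    (hB : ∀ x : Multiplicative (ℤ × ℤ), x ∈ B ↔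
      ∃ m n : ℤ, Multiplicative.toAdd x = (c * m, d * n))
    -- φ : A → B, φ(am, bn) = (cm, dn)
    (φ : A ≃* B)
    (hφ : ∀ (x : A) (m n : ℤ),
      Multiplicative.toAdd (x : Multiplicative (ℤ × ℤ)) = (a * m, b * n) →
      Multiplicative.toAdd ((φ x : B) : Multiplicative (ℤ × ℤ)) = (c * m, d * n)) :
    QLO.IsQLO (Submonoid.closure
      ((HNNExtension.of '' (P : Set (Multiplicative (ℤ × ℤ)))) ∪
        {HNNExtension.t (φ := φ)})) := by
  obtain rfl : P = Submonoid.oneLE _ := Submonoid.ext hP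
  obtain rfl : A = LatticeHNN.lattice a b :=
    Subgroup.ext fun x => (hA x).trans LatticeHNN.mem_lattice.symm
  obtain rfl : B = LatticeHNN.lattice c d :=
    Subgroup.ext fun x => (hB x).trans LatticeHNN.mem_lattice.symm
  refine ⟨fun x => HNNExtension.eq_one_of_mem_cone_of_inv_mem_cone ?_, ?_⟩
  · exact fun g hg hg' => le_antisymm (one_le_inv'.1 hg') hg
  · exact QLO.exists_isLub_of_forall_exists_le_iff
      (LatticeHNN.exists_forall_mem_and_le_iff ha hb hc hd hφ)
end

section
/- Fix an integer s ≥ 1. Let F₂ be the free group on two generators a, b, let F₂⁺ be the submonoid generated by a and b, and order F₂ by x ≤ y iff x⁻¹y ∈ F₂⁺. Let A = ⟨a^s⟩ be the cyclic subgroup generated by a^s. Then every left coset xA of A in F₂ with xA ∩ F₂⁺ ≠ ∅ contains a minimal representative in F₂⁺: there exists p ∈ xA ∩ F₂⁺ such that q ∈ xA ∩ F₂⁺ implies p ≤ q. -/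
/-- The free group on two generators `a = of true` and `b = of false`. -/
abbrev F₂ : Type := FreeGroup Bool

/-- The submonoid of `F₂` generated by the two generators. -/
def F₂pos : Submonoid F₂ := Submonoid.closure {FreeGroup.of true, FreeGroup.of false}

/-!
A homomorphism `φ : G → ℤ` that is nonnegative on `P` and positive on `g` bounds the exponents
`n` with `q gⁿ ∈ P` from below, so the coset `q ⟨g⟩` meets `P` in a least power `q gⁿ⁰`. Every
other element `q gⁿ` of the coset in `P` has `n ≥ n₀`, and differs from it by `gⁿ⁻ⁿ⁰ ∈ P`.
For `F₂` take `φ` the exponent sum and `g = aˢ`.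
-/

section MinimalRepresentative

variable {G : Type*} [Group G] {P : Submonoid G} {φ : G →* Multiplicative ℤ}

theorem neg_le_of_mul_zpow_mem (hφ : ∀ p ∈ P, 0 ≤ (φ p).toAdd) {g q : G}
    (hg : 0 < (φ g).toAdd) (hq : q ∈ P) {n : ℤ} (hn : q * g ^ n ∈ P) :
    -(φ q).toAdd ≤ n := by
  have hsum : 0 ≤ (φ q).toAdd + n * (φ g).toAdd := by
    simpa only [map_mul, map_zpow, toAdd_mul, toAdd_zpow, smul_eq_mul] using hφ _ hn
  have hq0 := hφ q hq
  rcases le_or_gt 0 n with h | h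
  · omega
  · nlinarith

theorem exists_minimal_mem_coset_zpowers (hφ : ∀ p ∈ P, 0 ≤ (φ p).toAdd) {g : G}
    (hgP : g ∈ P) (hg : 0 < (φ g).toAdd) (x : G)
    (hx : ∃ q ∈ P, x⁻¹ * q ∈ Subgroup.zpowers g) :
    ∃ p ∈ P, x⁻¹ * p ∈ Subgroup.zpowers g ∧
      ∀ q ∈ P, x⁻¹ * q ∈ Subgroup.zpowers g → QLO.le P p q := by
  obtain ⟨q, hq, hxq⟩ := hx
  obtain ⟨n₀, hn₀, hn₀_le⟩ := Int.exists_least_of_bdd (P := fun n => q * g ^ n ∈ P)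
    ⟨_, fun _ => neg_le_of_mul_zpow_mem hφ hg hq⟩ ⟨0, by simpa using hq⟩
  refine ⟨q * g ^ n₀, hn₀, ?_, fun q' hq' hxq' => ?_⟩
  · rw [← mul_assoc]
    exact mul_mem hxq (Subgroup.zpow_mem_zpowers g n₀)
  · obtain ⟨n, hn⟩ : ∃ n : ℤ, g ^ n = q⁻¹ * q' := Subgroup.mem_zpowers_iff.mp <| by
      simpa only [mul_inv_rev, inv_inv, mul_assoc, mul_inv_cancel_left] using
        mul_mem (inv_mem hxq) hxq'
    have hq'_eq : q' = q * g ^ n := by rw [hn, mul_inv_cancel_left]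
    obtain ⟨k, hk⟩ : ∃ k : ℕ, n = n₀ + k :=
      Int.exists_add_of_le (hn₀_le n (hq'_eq ▸ hq'))
    have hdiff : (q * g ^ n₀)⁻¹ * q' = g ^ k := by
      rw [hq'_eq, hk, zpow_add, zpow_natCast]; group
    rw [QLO.le, hdiff]
    exact pow_mem hgP k

end MinimalRepresentative

def FreeGroup.expSum {α : Type*} : FreeGroup α →* Multiplicative ℤ :=
  FreeGroup.lift fun _ => Multiplicative.ofAdd 1

theorem FreeGroup.expSum_of {α : Type*} (b : α) : (expSum (of b)).toAdd = 1 := by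
  simp [expSum]

theorem expSum_nonneg_of_mem_F₂pos {p : F₂} (hp : p ∈ F₂pos) :
    0 ≤ (FreeGroup.expSum p).toAdd := by
  induction hp using Submonoid.closure_induction with
  | mem x hx => rcases hx with rfl | rfl <;> simp [FreeGroup.expSum_of]
  | one => simp
  | mul x y _ _ hx hy => rw [map_mul, toAdd_mul]; omega

theorem stmt16 (s : ℕ) (hs : 1 ≤ s) (A : Subgroup F₂)
    (hA : A = Subgroup.zpowers (FreeGroup.of true ^ s)) :
    ∀ x : F₂, (∃ q ∈ F₂pos, x⁻¹ * q ∈ A) →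
      ∃ p ∈ F₂pos, x⁻¹ * p ∈ A ∧
        ∀ q ∈ F₂pos, x⁻¹ * q ∈ A → QLO.le F₂pos p q := by
  subst hA
  have ha : FreeGroup.of true ∈ F₂pos := Submonoid.subset_closure (Or.inl rfl)
  have hexp : 0 < (FreeGroup.expSum (FreeGroup.of true ^ s)).toAdd := by
    rw [map_pow, toAdd_pow, FreeGroup.expSum_of, nsmul_one]; exact_mod_cast hs
  exact exists_minimal_mem_coset_zpowers (fun _ => expSum_nonneg_of_mem_F₂pos)
    (pow_mem ha s) hexp
end

section
/- Let G = ℤ(√2) = {m + n√2 : m, n ∈ ℤ} regarded as an additive subgroup of ℝ, let P = G ∩ [0, ∞), and let A = ℤ(2√2) = {m + 2n√2 : m, n ∈ ℤ}, an additive subgroup of G. Then no nonzero element of P is a minimal representative of its coset modulo A: for every p ∈ P with p > 0 there exists q ∈ (p + A) ∩ P with q < p (equivalently, q ∈ (p + A) ∩ P but p ≤ q fails for the order x ≤ y iff y − x ∈ P). -/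
/-! Since `2√2` is irrational, `A = ℤ + 2√2 ℤ` is dense in `ℝ`, so the coset `p + A` meets the
interval `(0, p)`; its points there lie in `G` because `A ⊆ G`. -/

open Set

theorem AddSubgroup.exists_add_mem_Ioo_of_dense {G : Type*} [AddCommGroup G] [LinearOrder G]
    [IsOrderedAddMonoid G] [DenselyOrdered G] [TopologicalSpace G] [OrderTopology G]
    {H : AddSubgroup G}
    (hH : Dense (H : Set G)) {p : G} (hp : 0 < p) : ∃ a ∈ H, p + a ∈ Ioo 0 p := by
  obtain ⟨a, ha, hpa, ha0⟩ := hH.exists_between (neg_lt_zero.2 hp)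
  exact ⟨a, ha, neg_lt_iff_pos_add'.1 hpa, add_lt_of_neg_right p ha0⟩

theorem dense_addSubgroupClosure_two_mul_sqrt_two_one :
    Dense (AddSubgroup.closure {2 * √2, 1} : Set ℝ) := by
  rw [dense_addSubgroupClosure_pair_iff, div_one]
  exact irrational_sqrt_two.natCast_mul two_ne_zero

theorem stmt17 :
    ∀ p : ℝ,
      -- p ∈ G = ℤ(√2)
      (∃ m n : ℤ, p = (m : ℝ) + (n : ℝ) * Real.sqrt 2) →
      -- p > 0 (so p is a nonzero element of P = G ∩ [0, ∞))
      0 < p →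
      -- there is q ∈ (p + A) ∩ P with q < p, where A = ℤ(2√2)
      ∃ q : ℝ,
        (∃ m n : ℤ, q - p = (m : ℝ) + 2 * (n : ℝ) * Real.sqrt 2) ∧
        (∃ m n : ℤ, q = (m : ℝ) + (n : ℝ) * Real.sqrt 2) ∧
        0 ≤ q ∧ q < p := by
  rintro p ⟨m, n, rfl⟩ hp
  obtain ⟨a, ha, hq⟩ :=
    AddSubgroup.exists_add_mem_Ioo_of_dense dense_addSubgroupClosure_two_mul_sqrt_two_one hp
  obtain ⟨k, l, rfl⟩ := AddSubgroup.mem_closure_pair.1 ha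
  refine ⟨_, ⟨l, k, ?_⟩, ⟨m + l, n + 2 * k, ?_⟩, hq.1.le, hq.2⟩ <;>
    · simp only [zsmul_eq_mul, mul_one]
      push_cast
      ring
end
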